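/- Assume Γ(a,b) contains some matrix with the same support as X_0. Then: (i) the sequences (R_i(X_{2n}))_{n≥0} (for each i) and (C_j(X_{2n+1}))_{n≥0} (for each j) converge to 1 at an at least geometric rate; (ii) the IPFP sequence (X_n)_{n≥0} converges at an at least geometric rate to a matrix X_∞ with Supp(X_∞) = Supp(X_0). -/

import Mathlib

open Filter Topology

namespace IPFP

variable {p q : ℕ}

/-- Row sums `X(i,+)`. -/
noncomputable def rowSum (X : Matrix (Fin p) (Fin q) ℝ) (i : Fin p) : ℝ := ∑ j, X i j

/-- Column sums `X(+,j)`. -/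
noncomputable def colSum (X : Matrix (Fin p) (Fin q) ℝ) (j : Fin q) : ℝ := ∑ i, X i j

/-- `R_i(X) = X(i,+)/a_i`. -/
noncomputable def Rrat (a : Fin p → ℝ) (X : Matrix (Fin p) (Fin q) ℝ) (i : Fin p) : ℝ :=
  rowSum X i / a i

/-- `C_j(X) = X(+,j)/b_j`. -/
noncomputable def Crat (b : Fin q → ℝ) (X : Matrix (Fin p) (Fin q) ℝ) (j : Fin q) : ℝ :=
  colSum X j / b j

/-- `T_R(X)(i,j) = X(i,j)/R_i(X)`. -/
noncomputable def TR (a : Fin p → ℝ) (X : Matrix (Fin p) (Fin q) ℝ) :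
    Matrix (Fin p) (Fin q) ℝ :=
  fun i j => X i j / Rrat a X i

/-- `T_C(X)(i,j) = X(i,j)/C_j(X)`. -/
noncomputable def TC (b : Fin q → ℝ) (X : Matrix (Fin p) (Fin q) ℝ) :
    Matrix (Fin p) (Fin q) ℝ :=
  fun i j => X i j / Crat b X j

/-- The IPFP sequence: `X_0 = X0`, `X_{2n+1} = T_R(X_{2n})`, `X_{2n+2} = T_C(X_{2n+1})`. -/
noncomputable def ipfp (a : Fin p → ℝ) (b : Fin q → ℝ) (X0 : Matrix (Fin p) (Fin q) ℝ) :
    ℕ → Matrix (Fin p) (Fin q) ℝ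
  | 0 => X0
  | n + 1 => if Even n then TR a (ipfp a b X0 n) else TC b (ipfp a b X0 n)

/-- Membership in `Γ₀`: nonnegative entries, positive row and column sums. -/
def memGamma0 (X : Matrix (Fin p) (Fin q) ℝ) : Prop :=
  (∀ i j, 0 ≤ X i j) ∧ (∀ i, 0 < rowSum X i) ∧ (∀ j, 0 < colSum X j)

/-- Membership in `Γ₁`: member of `Γ₀` with total sum `1`. -/
def memGamma1 (X : Matrix (Fin p) (Fin q) ℝ) : Prop :=
  memGamma0 X ∧ ∑ i, ∑ j, X i j = 1

/-- Membership in `Γ(a,b)`: member of `Γ₀` with row marginals `a` and column marginals `b`. -/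
def memGamma (a : Fin p → ℝ) (b : Fin q → ℝ) (X : Matrix (Fin p) (Fin q) ℝ) : Prop :=
  memGamma0 X ∧ (∀ i, rowSum X i = a i) ∧ (∀ j, colSum X j = b j)

/-- `Supp(X) ⊆ Supp(Y)`. -/
def suppSubset (X Y : Matrix (Fin p) (Fin q) ℝ) : Prop :=
  ∀ i j, 0 < X i j → 0 < Y i j

/-- Membership in `Γ(a,b,X0)`: member of `Γ(a,b)` with support contained in `Supp(X0)`. -/
def memGammaSub (a : Fin p → ℝ) (b : Fin q → ℝ) (X0 X : Matrix (Fin p) (Fin q) ℝ) : Prop :=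
  memGamma a b X ∧ suppSubset X X0

/-- Relative entropy (I-divergence) `D(Y‖X) = Σ_{(i,j) ∈ Supp X} Y(i,j)·ln(Y(i,j)/X(i,j))`
(finite expression; it agrees with the relative entropy whenever `Supp Y ⊆ Supp X`,
with the convention `0·ln 0 = 0`). -/
noncomputable def relEnt (Y X : Matrix (Fin p) (Fin q) ℝ) : ℝ :=
  ∑ i, ∑ j, if 0 < X i j then Y i j * Real.log (Y i j / X i j) else 0

/-- A real sequence converges to `l` at an at least geometric rate:
it tends to `l` and `limsup_n |x_n − l|^{1/n} < 1`. -/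
noncomputable def geomSeq (x : ℕ → ℝ) (l : ℝ) : Prop :=
  Tendsto x atTop (nhds l) ∧
    Filter.limsup (fun n : ℕ => |x n - l| ^ ((n : ℝ)⁻¹)) atTop < 1

/-- A matrix sequence converges to `L` at an at least geometric rate (using the
`ℓ¹` norm on entries): it tends to `L` and `limsup_n ‖X_n − L‖^{1/n} < 1`. -/
noncomputable def geomMat (X : ℕ → Matrix (Fin p) (Fin q) ℝ)
    (L : Matrix (Fin p) (Fin q) ℝ) : Prop :=
  Tendsto X atTop (nhds L) ∧
    Filter.limsup (fun n : ℕ => (∑ i, ∑ j, |X n i j - L i j|) ^ ((n : ℝ)⁻¹)) atTop < 1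

end IPFP

open IPFP

/-!
Along the iteration the relative entropy `D(S ‖ X_n)` to the witness `S ∈ Γ(a,b)` does not
increase, which keeps every entry on `Supp X0` above a fixed `δ > 0`. Writing
`r_n(j) = C_j(X_{2n+1})`, one has `R_i(X_{2n+2}) = ∑_l t_il / r_n(l)` and
`r_{n+1}(j) = ∑_i w_ij / R_i(X_{2n+2})` with stochastic weights that are at least `δ` on
`Supp X0`. On each connected component of the graph joining two columns through a common
positive row, the maximum of `r_n` therefore decreases, its minimum increases, and within `q`
steps their gap shrinks by the factor `1 - δ ^ (2q)`; a mass balance over the component puts `1`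
between them. So all ratios tend to `1` geometrically, and since consecutive iterates differ
entrywise by at most `|ratio - 1|`, the iterates converge geometrically, to a limit that is
still at least `δ` on `Supp X0`.
-/

open Finset InformationTheory
open scoped Matrix

namespace IPFP

variable {p q : ℕ}

section WeightedMean

variable {ι : Type*} [Fintype ι] {w x : ι → ℝ} {M g ε : ℝ}

theorem sum_mul_le_of_le_on_support (hw : ∀ i, 0 ≤ w i) (hw1 : ∑ i, w i = 1)
    (hx : ∀ i, 0 < w i → x i ≤ M) : ∑ i, w i * x i ≤ M := by
  calc ∑ i, w i * x i ≤ ∑ i, w i * M := by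
        refine sum_le_sum fun i _ => ?_
        rcases (hw i).eq_or_lt with h | h
        · simp [← h]
        · exact mul_le_mul_of_nonneg_left (hx i h) h.le
    _ = M := by rw [← sum_mul, hw1, one_mul]

theorem le_sum_mul_of_le_on_support (hw : ∀ i, 0 ≤ w i) (hw1 : ∑ i, w i = 1)
    (hx : ∀ i, 0 < w i → M ≤ x i) : M ≤ ∑ i, w i * x i := by
  have := sum_mul_le_of_le_on_support (x := -x) (M := -M) hw hw1 fun i hi => neg_le_neg (hx i hi)
  simpa [sum_neg_distrib] using this

theorem sum_mul_le_sub_of_le_on_support (hw : ∀ i, 0 ≤ w i) (hw1 : ∑ i, w i = 1)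
    (hx : ∀ i, 0 < w i → x i ≤ M) {i₀ : ι} (hε : ε ≤ w i₀) (hg : 0 ≤ g)
    (hx₀ : x i₀ ≤ M - g) : ∑ i, w i * x i ≤ M - ε * g := by
  classical
  have hraised : ∑ i, w i * (x i + if i = i₀ then g else 0) ≤ M :=
    sum_mul_le_of_le_on_support hw hw1 fun i hi => by
      split_ifs with h
      · subst h; linarith
      · simpa using hx i hi
  simp only [mul_add, mul_ite, mul_zero, sum_add_distrib, sum_ite_eq', mem_univ,
    if_true] at hraised
  linarith [mul_le_mul_of_nonneg_right hε hg]

theorem le_sum_mul_add_of_le_on_support (hw : ∀ i, 0 ≤ w i) (hw1 : ∑ i, w i = 1)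
    (hx : ∀ i, 0 < w i → M ≤ x i) {i₀ : ι} (hε : ε ≤ w i₀) (hg : 0 ≤ g)
    (hx₀ : M + g ≤ x i₀) : M + ε * g ≤ ∑ i, w i * x i := by
  have := sum_mul_le_sub_of_le_on_support (x := -x) (M := -M) hw hw1
    (fun i hi => neg_le_neg (hx i hi)) hε hg (by simp only [Pi.neg_apply]; linarith)
  simp only [Pi.neg_apply, mul_neg, sum_neg_distrib] at this
  linarith

theorem inv_sum_mul_inv_le_sub_of_le_on_support (hw : ∀ i, 0 ≤ w i) (hw1 : ∑ i, w i = 1)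
    (hx0 : ∀ i, 0 < w i → 0 < x i) (hx : ∀ i, 0 < w i → x i ≤ M) {i₀ : ι}
    (hε0 : 0 ≤ ε) (hε : ε ≤ w i₀) (hg : 0 ≤ g) (hxi₀ : 0 < x i₀)
    (hx₀ : x i₀ ≤ M - g) :
    (∑ i, w i * (x i)⁻¹)⁻¹ ≤ M - ε * g := by
  have hε1 : ε ≤ 1 := hε.trans (hw1 ▸ single_le_sum (fun i _ => hw i) (mem_univ i₀))
  have hMg : 0 < M - g := hxi₀.trans_le hx₀
  have hM : 0 < M := by linarith
  have hgain : 0 ≤ (M - g)⁻¹ - M⁻¹ := sub_nonneg.2 (inv_anti₀ hMg (by linarith))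
  have hmean : M⁻¹ + ε * ((M - g)⁻¹ - M⁻¹) ≤ ∑ i, w i * (x i)⁻¹ :=
    le_sum_mul_add_of_le_on_support hw hw1 (fun i hi => inv_anti₀ (hx0 i hi) (hx i hi)) hε
      hgain (by rw [add_sub_cancel]; exact inv_anti₀ hxi₀ hx₀)
  have hpos : 0 < M⁻¹ + ε * ((M - g)⁻¹ - M⁻¹) := by positivity
  refine (inv_anti₀ hpos hmean).trans ?_
  rw [inv_le_iff_one_le_mul₀ hpos]
  have key : (M - ε * g) * (M⁻¹ + ε * ((M - g)⁻¹ - M⁻¹)) - 1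
      = ε * (1 - ε) * g ^ 2 / (M * (M - g)) := by
    field_simp
    ring
  have : 0 ≤ ε * (1 - ε) * g ^ 2 / (M * (M - g)) := by
    have := sub_nonneg.2 hε1
    positivity
  linarith

end WeightedMean

def IsGeomBounded (u : ℕ → ℝ) : Prop :=
  ∃ C θ : ℝ, 0 ≤ C ∧ 0 < θ ∧ θ < 1 ∧ ∀ n, u n ≤ C * θ ^ n

namespace IsGeomBounded

variable {u v : ℕ → ℝ}

theorem mono (hu : IsGeomBounded u) (hvu : ∀ n, v n ≤ u n) : IsGeomBounded v := by
  obtain ⟨C, θ, hC, hθ0, hθ1, h⟩ := hu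
  exact ⟨C, θ, hC, hθ0, hθ1, fun n => (hvu n).trans (h n)⟩

theorem const_mul (hu : IsGeomBounded u) {K : ℝ} (hK : 0 ≤ K) :
    IsGeomBounded fun n => K * u n := by
  obtain ⟨C, θ, hC, hθ0, hθ1, h⟩ := hu
  exact ⟨K * C, θ, by positivity, hθ0, hθ1, fun n => by
    rw [mul_assoc]; exact mul_le_mul_of_nonneg_left (h n) hK⟩

theorem add (hu : IsGeomBounded u) (hv : IsGeomBounded v) : IsGeomBounded fun n => u n + v n := by
  obtain ⟨C, θ, hC, hθ0, hθ1, h⟩ := hu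
  obtain ⟨C', θ', hC', hθ0', hθ1', h'⟩ := hv
  refine ⟨C + C', max θ θ', by positivity, lt_max_of_lt_left hθ0, max_lt hθ1 hθ1',
    fun n => ?_⟩
  calc u n + v n ≤ C * θ ^ n + C' * θ' ^ n := add_le_add (h n) (h' n)
    _ ≤ C * max θ θ' ^ n + C' * max θ θ' ^ n := by
        gcongr
        exacts [le_max_left _ _, le_max_right _ _]
    _ = (C + C') * max θ θ' ^ n := by ring

theorem sum {ι : Type*} {s : Finset ι} {u : ι → ℕ → ℝ}
    (h : ∀ i ∈ s, IsGeomBounded (u i)) :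
    IsGeomBounded fun n => ∑ i ∈ s, u i n := by
  classical
  induction s using Finset.induction_on with
  | empty => exact ⟨0, 1 / 2, le_rfl, by norm_num, by norm_num, fun n => by simp⟩
  | insert i s hi ih =>
    simp only [sum_insert hi]
    exact (h i (mem_insert_self i s)).add (ih fun j hj => h j (mem_insert_of_mem hj))

theorem of_succ (hu : IsGeomBounded fun n => u (n + 1)) : IsGeomBounded u := by
  obtain ⟨C, θ, hC, hθ0, hθ1, h⟩ := hu
  refine ⟨max (u 0) (C / θ), θ, le_max_of_le_right (by positivity), hθ0, hθ1, ?_⟩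
  rintro (_ | n)
  · simp
  · calc u (n + 1) ≤ C * θ ^ n := h n
      _ = C / θ * θ ^ (n + 1) := by field_simp; ring
      _ ≤ max (u 0) (C / θ) * θ ^ (n + 1) := by gcongr; exact le_max_right _ _

theorem of_even_odd (he : IsGeomBounded fun n => u (2 * n))
    (ho : IsGeomBounded fun n => u (2 * n + 1)) : IsGeomBounded u := by
  obtain ⟨C, θ, hC, hθ0, hθ1, h⟩ := he
  obtain ⟨C', θ', hC', hθ0', hθ1', h'⟩ := ho
  set σ := √(max θ θ')
  have hσ0 : 0 < σ := Real.sqrt_pos.2 (lt_max_of_lt_left hθ0)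
  have hσ1 : σ < 1 := by rw [Real.sqrt_lt' one_pos, one_pow]; exact max_lt hθ1 hθ1'
  have hσsq : σ ^ 2 = max θ θ' := Real.sq_sqrt (le_max_of_le_left hθ0.le)
  refine ⟨max C (C' / σ), σ, le_max_of_le_left hC, hσ0, hσ1, fun k => ?_⟩
  obtain ⟨n, rfl | rfl⟩ := Nat.even_or_odd' k
  · calc u (2 * n) ≤ C * θ ^ n := h n
      _ ≤ C * σ ^ (2 * n) := by
          rw [pow_mul, hσsq]; gcongr; exact le_max_left _ _
      _ ≤ max C (C' / σ) * σ ^ (2 * n) := by gcongr; exact le_max_left _ _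
  · calc u (2 * n + 1) ≤ C' * θ' ^ n := h' n
      _ ≤ C' / σ * σ ^ (2 * n + 1) := by
          rw [pow_succ, pow_mul, hσsq, div_mul_eq_mul_div, mul_div_assoc,
            mul_div_cancel_right₀ _ hσ0.ne']
          gcongr; exact le_max_right _ _
      _ ≤ max C (C' / σ) * σ ^ (2 * n + 1) := by gcongr; exact le_max_right _ _

theorem of_le_mul {N : ℕ} {ρ : ℝ} (hu0 : ∀ n, 0 ≤ u n) (hanti : ∀ n, u (n + 1) ≤ u n)
    (hN : 0 < N) (hρ : ρ < 1) (h : ∀ n, u (n + N) ≤ ρ * u n) : IsGeomBounded u := by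
  set ρ' := max ρ (1 / 2)
  have hρ'0 : 0 < ρ' := lt_max_of_lt_right one_half_pos
  set θ := ρ' ^ ((N : ℝ)⁻¹)
  have hθ0 : 0 < θ := Real.rpow_pos_of_pos hρ'0 _
  have hθ1 : θ < 1 := Real.rpow_lt_one hρ'0.le (max_lt hρ (by norm_num)) (by positivity)
  have hθN : θ ^ N = ρ' := Real.rpow_inv_natCast_pow hρ'0.le hN.ne'
  have hle0 : ∀ n, u n ≤ u 0 := fun n => antitone_nat_of_succ_le hanti (Nat.zero_le n)
  refine ⟨u 0 / ρ', θ, div_nonneg (hu0 0) hρ'0.le, hθ0, hθ1, fun n => ?_⟩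
  induction n using Nat.strong_induction_on with
  | _ n ih =>
    rcases lt_or_ge n N with hn | hn
    · calc u n ≤ u 0 / ρ' * θ ^ N := by rw [hθN, div_mul_cancel₀ _ hρ'0.ne']; exact hle0 n
        _ ≤ u 0 / ρ' * θ ^ n :=
            mul_le_mul_of_nonneg_left (pow_le_pow_of_le_one hθ0.le hθ1.le hn.le)
              (div_nonneg (hu0 0) hρ'0.le)
    · obtain ⟨m, rfl⟩ := Nat.exists_eq_add_of_le' hn
      calc u (m + N) ≤ ρ' * u m := (h m).trans (by gcongr; exacts [hu0 m, le_max_left _ _])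
        _ ≤ ρ' * (u 0 / ρ' * θ ^ m) := by gcongr; exact ih m (by omega)
        _ = u 0 / ρ' * θ ^ (m + N) := by rw [pow_add, hθN]; ring

theorem tendsto_zero (hu : IsGeomBounded u) (hu0 : ∀ n, 0 ≤ u n) :
    Tendsto u atTop (𝓝 0) := by
  obtain ⟨C, θ, -, hθ0, hθ1, h⟩ := hu
  refine squeeze_zero hu0 h ?_
  simpa using (tendsto_pow_atTop_nhds_zero_of_lt_one hθ0.le hθ1).const_mul C

theorem limsup_rpow_inv_lt_one (hu : IsGeomBounded u) (hu0 : ∀ n, 0 ≤ u n) :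
    limsup (fun n : ℕ => u n ^ ((n : ℝ)⁻¹)) atTop < 1 := by
  obtain ⟨C, θ, hC, hθ0, hθ1, h⟩ := hu
  have hroot : Tendsto (fun n : ℕ => (C + 1) ^ ((n : ℝ)⁻¹)) atTop (𝓝 1) := by
    have := ((Real.continuousAt_const_rpow (by positivity : C + 1 ≠ 0)).tendsto).comp
      (tendsto_inv_atTop_zero.comp tendsto_natCast_atTop_atTop)
    simpa [Function.comp_def] using this
  have hlt : 1 < (1 + θ) / 2 / θ := by rw [lt_div_iff₀ hθ0]; linarith
  have hev : ∀ᶠ n : ℕ in atTop, u n ^ ((n : ℝ)⁻¹) ≤ (1 + θ) / 2 := by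
    filter_upwards [hroot.eventually_le_const hlt, eventually_ge_atTop 1] with n hn hn1
    calc u n ^ ((n : ℝ)⁻¹) ≤ ((C + 1) * θ ^ n) ^ ((n : ℝ)⁻¹) := by
          gcongr
          · exact hu0 n
          · exact (h n).trans (by gcongr; linarith)
      _ = (C + 1) ^ ((n : ℝ)⁻¹) * θ := by
          rw [Real.mul_rpow (by positivity) (by positivity),
            Real.pow_rpow_inv_natCast hθ0.le (by omega)]
      _ ≤ (1 + θ) / 2 / θ * θ := by gcongr
      _ = (1 + θ) / 2 := div_mul_cancel₀ _ hθ0.ne'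
  refine (limsup_le_of_le ?_ hev).trans_lt (by linarith)
  exact isCoboundedUnder_le_of_le atTop fun n => Real.rpow_nonneg (hu0 n) _

end IsGeomBounded

theorem geomSeq_of_isGeomBounded {x : ℕ → ℝ} {l : ℝ}
    (h : IsGeomBounded fun n => |x n - l|) :
    geomSeq x l :=
  ⟨tendsto_iff_norm_sub_tendsto_zero.2 (h.tendsto_zero fun _ => abs_nonneg _),
    h.limsup_rpow_inv_lt_one fun _ => abs_nonneg _⟩

theorem exists_tendsto_of_isGeomBounded_sub {f : ℕ → ℝ}
    (h : IsGeomBounded fun n => |f (n + 1) - f n|) :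
    ∃ L, Tendsto f atTop (𝓝 L) ∧ IsGeomBounded fun n => |f n - L| := by
  obtain ⟨C, θ, hC, hθ0, hθ1, hf⟩ := h
  have hdist : ∀ n, dist (f n) (f (n + 1)) ≤ C * θ ^ n := fun n => by
    rw [Real.dist_eq, abs_sub_comm]; exact hf n
  obtain ⟨L, hL⟩ := cauchySeq_tendsto_of_complete (cauchySeq_of_le_geometric θ C hθ1 hdist)
  refine ⟨L, hL, C / (1 - θ), θ, div_nonneg hC (by linarith), hθ0, hθ1, fun n => ?_⟩
  have := dist_le_of_le_geometric_of_tendsto θ C hθ1 hdist hL n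
  rw [Real.dist_eq] at this
  simpa only [div_mul_eq_mul_div, mul_right_comm C] using this

section Scaling

variable {a : Fin p → ℝ} {b : Fin q → ℝ} {Y S : Matrix (Fin p) (Fin q) ℝ}

theorem TC_eq_transpose_TR : TC b Y = (TR b Yᵀ)ᵀ := rfl

theorem memGamma0_transpose : memGamma0 Yᵀ ↔ memGamma0 Y :=
  ⟨fun ⟨h0, hr, hc⟩ => ⟨fun i j => h0 j i, hc, hr⟩,
    fun ⟨h0, hr, hc⟩ => ⟨fun j i => h0 i j, hc, hr⟩⟩

theorem memGamma1_transpose : memGamma1 Yᵀ ↔ memGamma1 Y := by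
  rw [memGamma1, memGamma1, memGamma0_transpose,
    show ∑ j, ∑ i, Yᵀ j i = ∑ i, ∑ j, Y i j from sum_comm]

theorem exists_pos_of_rowSum_pos {i : Fin p} (h : 0 < rowSum Y i) : ∃ j, 0 < Y i j := by
  obtain ⟨j, -, hj⟩ :=
    exists_lt_of_sum_lt (s := univ) (f := 0) (g := Y i) (by simpa [rowSum] using h)
  exact ⟨j, hj⟩

theorem exists_pos_of_colSum_pos {j : Fin q} (h : 0 < colSum Y j) : ∃ i, 0 < Y i j :=
  exists_pos_of_rowSum_pos (Y := Yᵀ) h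

theorem entry_le_one (hY : memGamma1 Y) (i : Fin p) (j : Fin q) : Y i j ≤ 1 :=
  calc Y i j ≤ rowSum Y i := single_le_sum (fun j _ => hY.1.1 i j) (mem_univ j)
    _ ≤ ∑ i, rowSum Y i := single_le_sum (fun i _ => (hY.1.2.1 i).le) (mem_univ i)
    _ = 1 := hY.2

theorem TR_pos_iff {i : Fin p} {j : Fin q} (hR : 0 < Rrat a Y i) :
    0 < TR a Y i j ↔ 0 < Y i j :=
  div_pos_iff_of_pos_right hR

theorem TC_pos_iff {i : Fin p} {j : Fin q} (hC : 0 < Crat b Y j) :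
    0 < TC b Y i j ↔ 0 < Y i j :=
  TR_pos_iff (Y := Yᵀ) hC

theorem rowSum_TR {i : Fin p} (h : rowSum Y i ≠ 0) : rowSum (TR a Y) i = a i := by
  simp only [rowSum, TR, ← sum_div]
  exact div_div_cancel₀ h

theorem colSum_TC {j : Fin q} (h : colSum Y j ≠ 0) : colSum (TC b Y) j = b j :=
  rowSum_TR (Y := Yᵀ) h

theorem memGamma1_TR (ha : ∀ i, 0 < a i) (hsa : ∑ i, a i = 1) (hY : memGamma1 Y) :
    memGamma1 (TR a Y) := by
  obtain ⟨⟨hY0, hrow, hcol⟩, -⟩ := hY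
  have hR i : 0 < Rrat a Y i := div_pos (hrow i) (ha i)
  have hrowTR i : rowSum (TR a Y) i = a i := rowSum_TR (hrow i).ne'
  refine ⟨⟨fun i j => div_nonneg (hY0 i j) (hR i).le, fun i => hrowTR i ▸ ha i,
    fun j => ?_⟩, ?_⟩
  · obtain ⟨i, hij⟩ := exists_pos_of_colSum_pos (hcol j)
    exact ((TR_pos_iff (hR i)).2 hij).trans_le
      (single_le_sum (fun i _ => div_nonneg (hY0 i j) (hR i).le) (mem_univ i))
  · exact (sum_congr rfl fun i _ => hrowTR i).trans hsa

theorem memGamma1_TC (hb : ∀ j, 0 < b j) (hsb : ∑ j, b j = 1) (hY : memGamma1 Y) :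
    memGamma1 (TC b Y) :=
  memGamma1_transpose.1 (memGamma1_TR hb hsb (memGamma1_transpose.2 hY))

theorem abs_TR_sub {i : Fin p} (hR : Rrat a Y i ≠ 0) (j : Fin q) :
    |TR a Y i j - Y i j| = |TR a Y i j| * |Rrat a Y i - 1| := by
  rw [← abs_mul, mul_sub, mul_one, abs_sub_comm]
  congr 2
  exact (div_mul_cancel₀ _ hR).symm

theorem abs_TC_sub {j : Fin q} (hC : Crat b Y j ≠ 0) (i : Fin p) :
    |TC b Y i j - Y i j| = |TC b Y i j| * |Crat b Y j - 1| :=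
  abs_TR_sub (Y := Yᵀ) hC i

theorem relEnt_transpose : relEnt Sᵀ Yᵀ = relEnt S Y := sum_comm

theorem sum_ite_pos_eq_rowSum (hS0 : ∀ i j, 0 ≤ S i j) (hSY : suppSubset S Y) (i : Fin p) :
    ∑ j, (if 0 < Y i j then S i j else 0) = rowSum S i :=
  sum_congr rfl fun j _ => ite_eq_left_iff.2 fun hY =>
    (le_antisymm (not_lt.1 (mt (hSY i j) hY)) (hS0 i j)).symm

theorem relEnt_TR (hR : ∀ i, 0 < Rrat a Y i) (hS0 : ∀ i j, 0 ≤ S i j) (hSY : suppSubset S Y)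
    (hrow : ∀ i, rowSum S i = a i) :
    relEnt S (TR a Y) = relEnt S Y + ∑ i, a i * Real.log (Rrat a Y i) := by
  rw [relEnt, relEnt, ← sum_add_distrib]
  refine sum_congr rfl fun i _ => ?_
  have hterm j : (if 0 < TR a Y i j then S i j * Real.log (S i j / TR a Y i j) else 0) =
      (if 0 < Y i j then S i j * Real.log (S i j / Y i j) else 0) +
        (if 0 < Y i j then S i j else 0) * Real.log (Rrat a Y i) := by
    simp only [TR_pos_iff (hR i)]
    split_ifs with hY
    · rcases eq_or_ne (S i j) 0 with hS | hS
      · simp [hS]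
      · rw [TR, div_div_eq_mul_div, mul_div_right_comm,
          Real.log_mul (div_ne_zero hS hY.ne') (hR i).ne', mul_add]
    · simp
  rw [sum_congr rfl fun j _ => hterm j, sum_add_distrib, ← sum_mul,
    sum_ite_pos_eq_rowSum hS0 hSY, hrow]

theorem relEnt_TR_le (ha : ∀ i, 0 < a i) (hsa : ∑ i, a i = 1) (hY : memGamma1 Y)
    (hS0 : ∀ i j, 0 ≤ S i j) (hSY : suppSubset S Y) (hrow : ∀ i, rowSum S i = a i) :
    relEnt S (TR a Y) ≤ relEnt S Y := by
  have hR i : 0 < Rrat a Y i := div_pos (hY.1.2.1 i) (ha i)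
  rw [relEnt_TR hR hS0 hSY hrow, add_le_iff_nonpos_right]
  calc ∑ i, a i * Real.log (Rrat a Y i) ≤ ∑ i, a i * (Rrat a Y i - 1) :=
        sum_le_sum fun i _ => mul_le_mul_of_nonneg_left
          (Real.log_le_sub_one_of_pos (hR i)) (ha i).le
    _ = ∑ i, rowSum Y i - ∑ i, a i := by
        rw [← sum_sub_distrib]
        exact sum_congr rfl fun i _ => by
          rw [Rrat, mul_sub, mul_div_cancel₀ _ (ha i).ne', mul_one]
    _ = 0 := by rw [show ∑ i, rowSum Y i = 1 from hY.2, hsa, sub_self]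

theorem relEnt_TC_le (hb : ∀ j, 0 < b j) (hsb : ∑ j, b j = 1) (hY : memGamma1 Y)
    (hS0 : ∀ i j, 0 ≤ S i j) (hSY : suppSubset S Y) (hcol : ∀ j, colSum S j = b j) :
    relEnt S (TC b Y) ≤ relEnt S Y := by
  rw [TC_eq_transpose_TR, ← relEnt_transpose (Y := Y), ← relEnt_transpose]
  exact relEnt_TR_le hb hsb (memGamma1_transpose.2 hY) (fun j i => hS0 i j) (fun j i => hSY i j)
    hcol

theorem relEnt_eq_sum_klFun (hY0 : ∀ i j, 0 ≤ Y i j) (hS0 : ∀ i j, 0 ≤ S i j)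
    (hSY : suppSubset S Y) (hmass : ∑ i, rowSum S i = ∑ i, rowSum Y i) :
    relEnt S Y = ∑ i, ∑ j,
      if 0 < Y i j then Y i j * klFun (S i j / Y i j) else 0 := by
  have hterm i j : (if 0 < Y i j then Y i j * klFun (S i j / Y i j) else 0) =
      (if 0 < Y i j then S i j * Real.log (S i j / Y i j) else 0) +
        ((if 0 < Y i j then Y i j else 0) - if 0 < Y i j then S i j else 0) := by
    split_ifs with hY
    · rw [klFun_apply]
      field_simp
      ring
    · simp
  simp only [hterm, sum_add_distrib, sum_sub_distrib, sum_ite_pos_eq_rowSum hS0 hSY,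
    sum_ite_pos_eq_rowSum hY0 fun _ _ h => h, hmass, sub_self, add_zero]
  rfl

/-- The summands `Y klFun (S / Y) = S log (S / Y) + Y - S` are nonnegative, so a single one
is bounded by `D`. -/
theorem mul_exp_le_of_relEnt_le (hY0 : ∀ i j, 0 ≤ Y i j) (hS0 : ∀ i j, 0 ≤ S i j)
    (hSY : suppSubset S Y) (hmass : ∑ i, rowSum S i = ∑ i, rowSum Y i) {D : ℝ}
    (hD : relEnt S Y ≤ D) {i : Fin p} {j : Fin q} (hij : 0 < S i j) :
    S i j * Real.exp (-(D / S i j + 1)) ≤ Y i j := by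
  have hY : 0 < Y i j := hSY i j hij
  have hnonneg k l : 0 ≤ if 0 < Y k l then Y k l * klFun (S k l / Y k l) else 0 := by
    split_ifs with h
    · exact mul_nonneg h.le (klFun_nonneg (div_nonneg (hS0 k l) h.le))
    · exact le_rfl
  have hsingle : Y i j * klFun (S i j / Y i j) ≤ D := by
    refine le_trans ?_ (relEnt_eq_sum_klFun hY0 hS0 hSY hmass ▸ hD)
    calc Y i j * klFun (S i j / Y i j)
        = if 0 < Y i j then Y i j * klFun (S i j / Y i j) else 0 := (if_pos hY).symm
      _ ≤ _ := single_le_sum (fun l _ => hnonneg i l) (mem_univ j)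
      _ ≤ _ := single_le_sum (fun k _ => sum_nonneg fun l _ => hnonneg k l) (mem_univ i)
  have hid : Y i j * klFun (S i j / Y i j) =
      S i j * Real.log (S i j / Y i j) + Y i j - S i j := by
    rw [klFun_apply]
    field_simp
  have hlog : Real.log (S i j / Y i j) ≤ D / S i j + 1 := by
    rw [div_add_one hij.ne', le_div_iff₀ hij]
    linarith
  have hratio : S i j ≤ Real.exp (D / S i j + 1) * Y i j := by
    rw [← div_le_iff₀ hY, ← Real.log_le_iff_le_exp (div_pos hij hY)]
    exact hlog
  rw [Real.exp_neg, ← div_eq_mul_inv, div_le_iff₀ (Real.exp_pos _)]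
  linarith

end Scaling

theorem exists_pos_le_of_forall_pos {α : Type*} [Finite α] {f : α → ℝ}
    (hf : ∀ x, 0 < f x) :
    ∃ δ, 0 < δ ∧ ∀ x, δ ≤ f x := by
  cases isEmpty_or_nonempty α
  · exact ⟨1, one_pos, isEmptyElim⟩
  · obtain ⟨x₀, hx₀⟩ := Finite.exists_min f
    exact ⟨f x₀, hf x₀, hx₀⟩

def colGraph (X : Matrix (Fin p) (Fin q) ℝ) : SimpleGraph (Fin q) :=
  SimpleGraph.fromRel fun j l => ∃ i, 0 < X i j ∧ 0 < X i l

theorem colGraph_reachable_of_pos {X : Matrix (Fin p) (Fin q) ℝ} {i : Fin p} {j l : Fin q}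
    (hj : 0 < X i j) (hl : 0 < X i l) : (colGraph X).Reachable j l := by
  rcases eq_or_ne j l with rfl | hne
  · rfl
  · exact SimpleGraph.Adj.reachable ⟨hne, Or.inl ⟨i, hj, hl⟩⟩

theorem exists_row_of_colGraph_adj {X : Matrix (Fin p) (Fin q) ℝ} {j l : Fin q}
    (h : (colGraph X).Adj j l) : ∃ i, 0 < X i j ∧ 0 < X i l := by
  obtain ⟨-, ⟨i, hj, hl⟩ | ⟨i, hl, hj⟩⟩ := h <;> exact ⟨i, hj, hl⟩

structure Problem (p q : ℕ) where
  a : Fin p → ℝ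
  b : Fin q → ℝ
  ha : ∀ i, 0 < a i
  hb : ∀ j, 0 < b j
  hsa : ∑ i, a i = 1
  hsb : ∑ j, b j = 1
  X0 : Matrix (Fin p) (Fin q) ℝ
  hX0 : memGamma1 X0
  S : Matrix (Fin p) (Fin q) ℝ
  hS : memGamma a b S
  hSX0 : ∀ i j, 0 < S i j ↔ 0 < X0 i j

namespace Problem

variable (P : Problem p q)

noncomputable def X (n : ℕ) : Matrix (Fin p) (Fin q) ℝ := ipfp P.a P.b P.X0 n

theorem X_succ (n : ℕ) :
    P.X (n + 1) = if Even n then TR P.a (P.X n) else TC P.b (P.X n) := rfl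

theorem X_two_mul_add_one (n : ℕ) : P.X (2 * n + 1) = TR P.a (P.X (2 * n)) := by
  simp [X_succ]

theorem X_two_mul_add_two (n : ℕ) : P.X (2 * n + 2) = TC P.b (P.X (2 * n + 1)) := by
  simp [X_succ]

theorem memGamma1_X (n : ℕ) : memGamma1 (P.X n) := by
  induction n with
  | zero => exact P.hX0
  | succ n ih =>
    rw [X_succ]
    split_ifs
    exacts [memGamma1_TR P.ha P.hsa ih, memGamma1_TC P.hb P.hsb ih]

theorem X_nonneg (n : ℕ) (i : Fin p) (j : Fin q) : 0 ≤ P.X n i j := (P.memGamma1_X n).1.1 i j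

theorem X_pos_iff (n : ℕ) (i : Fin p) (j : Fin q) : 0 < P.X n i j ↔ 0 < P.X0 i j := by
  induction n with
  | zero => rfl
  | succ n ih =>
    obtain ⟨⟨-, hrow, hcol⟩, -⟩ := P.memGamma1_X n
    rw [X_succ]
    split_ifs
    · rw [TR_pos_iff (div_pos (hrow i) (P.ha i)), ih]
    · rw [TC_pos_iff (div_pos (hcol j) (P.hb j)), ih]

theorem rowSum_X_two_mul_add_one (n : ℕ) (i : Fin p) : rowSum (P.X (2 * n + 1)) i = P.a i := by
  rw [X_two_mul_add_one]
  exact rowSum_TR ((P.memGamma1_X _).1.2.1 i).ne'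

theorem colSum_X_two_mul_add_two (n : ℕ) (j : Fin q) : colSum (P.X (2 * n + 2)) j = P.b j := by
  rw [X_two_mul_add_two]
  exact colSum_TC ((P.memGamma1_X _).1.2.2 j).ne'

theorem relEnt_X_le (n : ℕ) : relEnt P.S (P.X n) ≤ relEnt P.S P.X0 := by
  have hS0 := P.hS.1.1
  have hSX n : suppSubset P.S (P.X n) := fun i j h => (P.X_pos_iff n i j).2 ((P.hSX0 i j).1 h)
  induction n with
  | zero => rfl
  | succ n ih =>
    refine le_trans ?_ ih
    rw [X_succ]
    split_ifs
    · exact relEnt_TR_le P.ha P.hsa (P.memGamma1_X n) hS0 (hSX n) P.hS.2.1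
    · exact relEnt_TC_le P.hb P.hsb (P.memGamma1_X n) hS0 (hSX n) P.hS.2.2

theorem exists_le_X : ∃ δ, 0 < δ ∧ ∀ n i j, 0 < P.X0 i j → δ ≤ P.X n i j := by
  set D := relEnt P.S P.X0
  obtain ⟨δ, hδ, hle⟩ := exists_pos_le_of_forall_pos (f := fun ij : Fin p × Fin q =>
    if 0 < P.S ij.1 ij.2 then P.S ij.1 ij.2 * Real.exp (-(D / P.S ij.1 ij.2 + 1)) else 1)
    fun ij => by split_ifs with h <;> positivity
  refine ⟨δ, hδ, fun n i j hij => ?_⟩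
  have hS : 0 < P.S i j := (P.hSX0 i j).2 hij
  have hmass : ∑ i, rowSum P.S i = ∑ i, rowSum (P.X n) i := by
    rw [show ∑ i, rowSum (P.X n) i = 1 from (P.memGamma1_X n).2]
    exact (sum_congr rfl fun i _ => P.hS.2.1 i).trans P.hsa
  calc δ ≤ P.S i j * Real.exp (-(D / P.S i j + 1)) := by simpa [hS] using hle (i, j)
    _ ≤ P.X n i j := mul_exp_le_of_relEnt_le (P.X_nonneg n) P.hS.1.1
      (fun i j h => (P.X_pos_iff n i j).2 ((P.hSX0 i j).1 h)) hmass (P.relEnt_X_le n) hS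

noncomputable def delta : ℝ := P.exists_le_X.choose

theorem delta_pos : 0 < P.delta := P.exists_le_X.choose_spec.1

theorem delta_le_X (n : ℕ) {i : Fin p} {j : Fin q} (hij : 0 < P.X0 i j) : P.delta ≤ P.X n i j :=
  P.exists_le_X.choose_spec.2 n i j hij

theorem a_le_one (i : Fin p) : P.a i ≤ 1 :=
  P.hsa ▸ single_le_sum (fun i _ => (P.ha i).le) (mem_univ i)

theorem b_le_one (j : Fin q) : P.b j ≤ 1 :=
  P.hsb ▸ single_le_sum (fun j _ => (P.hb j).le) (mem_univ j)

noncomputable def colRatio (n : ℕ) (j : Fin q) : ℝ := Crat P.b (P.X (2 * n + 1)) j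

noncomputable def rowRatio (n : ℕ) (i : Fin p) : ℝ := Rrat P.a (P.X (2 * n + 2)) i

noncomputable def rowWeight (n : ℕ) (i : Fin p) (l : Fin q) : ℝ := P.X (2 * n + 1) i l / P.a i

noncomputable def colWeight (n : ℕ) (i : Fin p) (j : Fin q) : ℝ := P.X (2 * n + 2) i j / P.b j

theorem rowRatio_pos (n : ℕ) (i : Fin p) : 0 < P.rowRatio n i :=
  div_pos ((P.memGamma1_X _).1.2.1 i) (P.ha i)

theorem colRatio_pos (n : ℕ) (j : Fin q) : 0 < P.colRatio n j :=
  div_pos ((P.memGamma1_X _).1.2.2 j) (P.hb j)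

theorem delta_le_colRatio (n : ℕ) (j : Fin q) : P.delta ≤ P.colRatio n j := by
  obtain ⟨i, hij⟩ := exists_pos_of_colSum_pos (P.hX0.1.2.2 j)
  calc P.delta ≤ P.X (2 * n + 1) i j := P.delta_le_X _ hij
    _ ≤ colSum (P.X (2 * n + 1)) j := single_le_sum (fun i _ => P.X_nonneg _ i j) (mem_univ i)
    _ ≤ P.colRatio n j := le_div_self ((P.memGamma1_X _).1.2.2 j).le (P.hb j) (P.b_le_one j)

theorem rowWeight_nonneg (n : ℕ) (i : Fin p) (l : Fin q) : 0 ≤ P.rowWeight n i l :=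
  div_nonneg (P.X_nonneg _ i l) (P.ha i).le

theorem colWeight_nonneg (n : ℕ) (i : Fin p) (j : Fin q) : 0 ≤ P.colWeight n i j :=
  div_nonneg (P.X_nonneg _ i j) (P.hb j).le

theorem sum_rowWeight (n : ℕ) (i : Fin p) : ∑ l, P.rowWeight n i l = 1 := by
  simp only [rowWeight, ← sum_div]
  exact (div_eq_one_iff_eq (P.ha i).ne').2 (P.rowSum_X_two_mul_add_one n i)

theorem sum_colWeight (n : ℕ) (j : Fin q) : ∑ i, P.colWeight n i j = 1 := by
  simp only [colWeight, ← sum_div]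
  exact (div_eq_one_iff_eq (P.hb j).ne').2 (P.colSum_X_two_mul_add_two n j)

theorem rowWeight_pos_iff (n : ℕ) (i : Fin p) (l : Fin q) :
    0 < P.rowWeight n i l ↔ 0 < P.X0 i l :=
  (div_pos_iff_of_pos_right (P.ha i)).trans (P.X_pos_iff _ i l)

theorem colWeight_pos_iff (n : ℕ) (i : Fin p) (j : Fin q) :
    0 < P.colWeight n i j ↔ 0 < P.X0 i j :=
  (div_pos_iff_of_pos_right (P.hb j)).trans (P.X_pos_iff _ i j)

theorem delta_le_rowWeight (n : ℕ) {i : Fin p} {l : Fin q} (h : 0 < P.X0 i l) :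
    P.delta ≤ P.rowWeight n i l :=
  (P.delta_le_X _ h).trans (le_div_self (P.X_nonneg _ i l) (P.ha i) (P.a_le_one i))

theorem delta_le_colWeight (n : ℕ) {i : Fin p} {j : Fin q} (h : 0 < P.X0 i j) :
    P.delta ≤ P.colWeight n i j :=
  (P.delta_le_X _ h).trans (le_div_self (P.X_nonneg _ i j) (P.hb j) (P.b_le_one j))

theorem rowRatio_eq (n : ℕ) (i : Fin p) :
    P.rowRatio n i = ∑ l, P.rowWeight n i l * (P.colRatio n l)⁻¹ := by
  rw [rowRatio, X_two_mul_add_two, Rrat, rowSum, sum_div]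
  exact sum_congr rfl fun l _ => by rw [TC, colRatio, rowWeight]; ring

theorem colRatio_succ_eq (n : ℕ) (j : Fin q) :
    P.colRatio (n + 1) j = ∑ i, P.colWeight n i j * (P.rowRatio n i)⁻¹ := by
  rw [colRatio, X_two_mul_add_one, show 2 * (n + 1) = 2 * n + 2 by ring, Crat, colSum, sum_div]
  exact sum_congr rfl fun i _ => by rw [TR, rowRatio, colWeight]; ring

open Classical in
noncomputable def block (j : Fin q) : Finset (Fin q) := univ.filter ((colGraph P.X0).Reachable j)

theorem mem_block {j l : Fin q} : l ∈ P.block j ↔ (colGraph P.X0).Reachable j l := by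
  simp [block]

theorem self_mem_block (j : Fin q) : j ∈ P.block j := P.mem_block.2 .rfl

theorem block_eq_of_reachable {j l : Fin q} (h : (colGraph P.X0).Reachable j l) :
    P.block j = P.block l := by
  ext m
  simp only [mem_block]
  exact ⟨h.symm.trans, h.trans⟩

noncomputable def maxRatio (n : ℕ) (j : Fin q) : ℝ :=
  (P.block j).sup' ⟨j, P.self_mem_block j⟩ (P.colRatio n)

noncomputable def minRatio (n : ℕ) (j : Fin q) : ℝ :=
  (P.block j).inf' ⟨j, P.self_mem_block j⟩ (P.colRatio n)

noncomputable def spread (n : ℕ) (j : Fin q) : ℝ := P.maxRatio n j - P.minRatio n j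

theorem colRatio_le_maxRatio {n : ℕ} {j l : Fin q} (h : l ∈ P.block j) :
    P.colRatio n l ≤ P.maxRatio n j :=
  le_sup' _ h

theorem minRatio_le_colRatio {n : ℕ} {j l : Fin q} (h : l ∈ P.block j) :
    P.minRatio n j ≤ P.colRatio n l :=
  inf'_le _ h

theorem maxRatio_eq_of_reachable (n : ℕ) {j l : Fin q} (h : (colGraph P.X0).Reachable j l) :
    P.maxRatio n j = P.maxRatio n l :=
  sup'_congr _ (P.block_eq_of_reachable h) fun _ _ => rfl

theorem minRatio_eq_of_reachable (n : ℕ) {j l : Fin q} (h : (colGraph P.X0).Reachable j l) :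
    P.minRatio n j = P.minRatio n l :=
  inf'_congr _ (P.block_eq_of_reachable h) fun _ _ => rfl

theorem delta_le_minRatio (n : ℕ) (j : Fin q) : P.delta ≤ P.minRatio n j :=
  le_inf' _ _ fun l _ => P.delta_le_colRatio n l

theorem spread_nonneg (n : ℕ) (j : Fin q) : 0 ≤ P.spread n j :=
  sub_nonneg.2 ((P.minRatio_le_colRatio (P.self_mem_block j)).trans
    (P.colRatio_le_maxRatio (P.self_mem_block j)))

theorem inv_rowRatio_mem {n : ℕ} {i : Fin p} {j : Fin q} (hij : 0 < P.X0 i j) :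
    P.minRatio n j ≤ (P.rowRatio n i)⁻¹ ∧ (P.rowRatio n i)⁻¹ ≤ P.maxRatio n j := by
  have hmin := P.delta_pos.trans_le (P.delta_le_minRatio n j)
  have hblock l (hl : 0 < P.rowWeight n i l) : l ∈ P.block j :=
    P.mem_block.2 (colGraph_reachable_of_pos hij ((P.rowWeight_pos_iff n i l).1 hl))
  constructor
  · rw [le_inv_comm₀ hmin (P.rowRatio_pos n i), rowRatio_eq]
    exact sum_mul_le_of_le_on_support (P.rowWeight_nonneg n i) (P.sum_rowWeight n i)
      fun l hl => inv_anti₀ hmin (P.minRatio_le_colRatio (hblock l hl))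
  · rw [inv_le_comm₀ (P.rowRatio_pos n i)
      ((P.colRatio_pos n j).trans_le (P.colRatio_le_maxRatio (P.self_mem_block j))), rowRatio_eq]
    exact le_sum_mul_of_le_on_support (P.rowWeight_nonneg n i) (P.sum_rowWeight n i)
      fun l hl => inv_anti₀ (P.colRatio_pos n l) (P.colRatio_le_maxRatio (hblock l hl))

theorem colRatio_succ_mem (n : ℕ) (j : Fin q) :
    P.minRatio n j ≤ P.colRatio (n + 1) j ∧ P.colRatio (n + 1) j ≤ P.maxRatio n j := by
  rw [colRatio_succ_eq]
  exact ⟨le_sum_mul_of_le_on_support (P.colWeight_nonneg n · j) (P.sum_colWeight n j)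
      fun i hi => (P.inv_rowRatio_mem ((P.colWeight_pos_iff n i j).1 hi)).1,
    sum_mul_le_of_le_on_support (P.colWeight_nonneg n · j) (P.sum_colWeight n j)
      fun i hi => (P.inv_rowRatio_mem ((P.colWeight_pos_iff n i j).1 hi)).2⟩

theorem maxRatio_antitone (j : Fin q) : Antitone fun n => P.maxRatio n j :=
  antitone_nat_of_succ_le fun n => sup'_le _ _ fun l hl =>
    (P.colRatio_succ_mem n l).2.trans_eq (P.maxRatio_eq_of_reachable n (P.mem_block.1 hl)).symm

theorem minRatio_monotone (j : Fin q) : Monotone fun n => P.minRatio n j :=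
  monotone_nat_of_le_succ fun n => le_inf' _ _ fun l hl =>
    (P.minRatio_eq_of_reachable n (P.mem_block.1 hl)).trans_le (P.colRatio_succ_mem n l).1

theorem spread_succ_le (n : ℕ) (j : Fin q) : P.spread (n + 1) j ≤ P.spread n j :=
  sub_le_sub (P.maxRatio_antitone j n.le_succ) (P.minRatio_monotone j n.le_succ)

/-- One step spreads a deficit `g` below `M` from column `l` to every column `j` sharing a row
with it, at the price of a factor `δ²`: `δ` for the harmonic mean along the row, `δ` for the
arithmetic mean down the column. -/
theorem colRatio_succ_le_of_row {n : ℕ} {M g : ℝ} {i₀ : Fin p} {j l : Fin q}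
    (hM : P.maxRatio n j ≤ M) (hg : 0 ≤ g) (hj : 0 < P.X0 i₀ j) (hl : 0 < P.X0 i₀ l)
    (hlg : P.colRatio n l ≤ M - g) : P.colRatio (n + 1) j ≤ M - P.delta ^ 2 * g := by
  have hrow : (P.rowRatio n i₀)⁻¹ ≤ M - P.delta * g := by
    rw [rowRatio_eq]
    refine inv_sum_mul_inv_le_sub_of_le_on_support (P.rowWeight_nonneg n i₀)
      (P.sum_rowWeight n i₀) (fun l _ => P.colRatio_pos n l) (fun l' hl' => ?_)
      P.delta_pos.le (P.delta_le_rowWeight n hl) hg (P.colRatio_pos n l) hlg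
    exact (P.colRatio_le_maxRatio (P.mem_block.2
      (colGraph_reachable_of_pos hj ((P.rowWeight_pos_iff n i₀ l').1 hl')))).trans hM
  rw [colRatio_succ_eq, pow_two, mul_assoc]
  exact sum_mul_le_sub_of_le_on_support (P.colWeight_nonneg n · j) (P.sum_colWeight n j)
    (fun i hi => (P.inv_rowRatio_mem ((P.colWeight_pos_iff n i j).1 hi)).2.trans hM)
    (P.delta_le_colWeight n hj) (mul_nonneg P.delta_pos.le hg) hrow

theorem colRatio_add_le_of_walk {n : ℕ} {l : Fin q} {g : ℝ} (hg : 0 ≤ g)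
    (hl : P.colRatio n l ≤ P.maxRatio n l - g) (k : ℕ) :
    ∀ {j : Fin q} (w : (colGraph P.X0).Walk j l), w.length ≤ k →
      P.colRatio (n + k) j ≤ P.maxRatio n l - P.delta ^ (2 * k) * g := by
  induction k with
  | zero =>
    rintro j (_ | ⟨_, _⟩) hw
    · simpa using hl
    · simp at hw
  | succ k ih =>
    have step {j l' : Fin q} (hjl : (colGraph P.X0).Reachable j l)
        (hrow : ∃ i₀, 0 < P.X0 i₀ j ∧ 0 < P.X0 i₀ l')
        (hl' : P.colRatio (n + k) l' ≤ P.maxRatio n l - P.delta ^ (2 * k) * g) :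
        P.colRatio (n + (k + 1)) j ≤ P.maxRatio n l - P.delta ^ (2 * (k + 1)) * g := by
      obtain ⟨i₀, hj, hl'0⟩ := hrow
      have hM : P.maxRatio (n + k) j ≤ P.maxRatio n l :=
        (P.maxRatio_eq_of_reachable _ hjl).trans_le (P.maxRatio_antitone l (n.le_add_right k))
      have := P.colRatio_succ_le_of_row hM (mul_nonneg (pow_nonneg P.delta_pos.le _) hg)
        hj hl'0 hl'
      rw [← add_assoc]
      convert this using 2
      ring
    rintro j (_ | ⟨hadj, w⟩) hw
    · obtain ⟨i₀, hi₀⟩ := exists_pos_of_colSum_pos (P.hX0.1.2.2 l)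
      exact step .rfl ⟨i₀, hi₀, hi₀⟩ (ih .nil (Nat.zero_le k))
    · exact step ⟨.cons hadj w⟩ (exists_row_of_colGraph_adj hadj)
        (ih w (by simpa using hw))

/-- A shortest walk inside a block has fewer than `q` edges, so after `q` steps the deficit of
the column realising the minimum has reached the whole block. -/
theorem spread_add_le (n : ℕ) (j : Fin q) :
    P.spread (n + q) j ≤ (1 - P.delta ^ (2 * q)) * P.spread n j := by
  obtain ⟨l₀, hl₀, hmin⟩ : ∃ l₀ ∈ P.block j, P.minRatio n j = P.colRatio n l₀ :=
    exists_mem_eq_inf' _ _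
  have hjl₀ := P.mem_block.1 hl₀
  have hM : P.maxRatio n l₀ = P.maxRatio n j := (P.maxRatio_eq_of_reachable n hjl₀).symm
  have hmax : P.maxRatio (n + q) j ≤ P.maxRatio n j - P.delta ^ (2 * q) * P.spread n j := by
    refine sup'_le _ _ fun l hl => ?_
    obtain ⟨w⟩ := (P.mem_block.1 hl).symm.trans hjl₀
    rw [← hM]
    refine P.colRatio_add_le_of_walk (P.spread_nonneg n j) ?_ q w.bypass ?_
    · rw [hM, spread, hmin, sub_sub_cancel]
    · simpa using w.bypass_isPath.length_lt.le
  have hmin' : P.minRatio n j ≤ P.minRatio (n + q) j := P.minRatio_monotone j (n.le_add_right q)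
  simp only [spread] at hmax ⊢
  linarith

/-- A row with a positive entry in a block has all its positive entries in that block. -/
theorem sum_block_eq {Y : Matrix (Fin p) (Fin q) ℝ} (hY0 : ∀ i l, 0 ≤ Y i l)
    (hY : suppSubset Y P.X0) (i : Fin p) (j : Fin q) :
    ∑ l ∈ P.block j, Y i l = if ∃ l ∈ P.block j, 0 < P.X0 i l then rowSum Y i else 0 := by
  have hzero {l} (h : ¬ 0 < P.X0 i l) : Y i l = 0 :=
    le_antisymm (not_lt.1 (mt (hY i l) h)) (hY0 i l)
  split_ifs with hrow
  · obtain ⟨l₀, hl₀, hil₀⟩ := hrow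
    refine sum_subset (subset_univ _) fun l _ hl => hzero fun hil => hl ?_
    exact P.mem_block.2 ((P.mem_block.1 hl₀).trans (colGraph_reachable_of_pos hil₀ hil))
  · exact sum_eq_zero fun l hl => hzero fun hil => hrow ⟨l, hl, hil⟩

theorem sum_block_colSum_eq {Y Y' : Matrix (Fin p) (Fin q) ℝ} (hY0 : ∀ i l, 0 ≤ Y i l)
    (hY : suppSubset Y P.X0) (hY'0 : ∀ i l, 0 ≤ Y' i l) (hY' : suppSubset Y' P.X0)
    (hrow : ∀ i, rowSum Y i = rowSum Y' i) (j : Fin q) :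
    ∑ l ∈ P.block j, colSum Y l = ∑ l ∈ P.block j, colSum Y' l := by
  simp only [colSum]
  rw [sum_comm, sum_comm (s := P.block j)]
  exact sum_congr rfl fun i _ => by rw [P.sum_block_eq hY0 hY, P.sum_block_eq hY'0 hY', hrow]

theorem sum_block_mul_colRatio (n : ℕ) (j : Fin q) :
    ∑ l ∈ P.block j, P.b l * P.colRatio n l = ∑ l ∈ P.block j, P.b l := by
  have hX : suppSubset (P.X (2 * n + 1)) P.X0 := fun i l => (P.X_pos_iff _ i l).1
  have hS : suppSubset P.S P.X0 := fun i l => (P.hSX0 i l).1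
  calc ∑ l ∈ P.block j, P.b l * P.colRatio n l
        = ∑ l ∈ P.block j, colSum (P.X (2 * n + 1)) l :=
        sum_congr rfl fun l _ => mul_div_cancel₀ _ (P.hb l).ne'
    _ = ∑ l ∈ P.block j, colSum P.S l :=
        P.sum_block_colSum_eq (P.X_nonneg _) hX P.hS.1.1 hS
          (fun i => (P.rowSum_X_two_mul_add_one n i).trans (P.hS.2.1 i).symm) j
    _ = ∑ l ∈ P.block j, P.b l := sum_congr rfl fun l _ => P.hS.2.2 l

theorem minRatio_le_one (n : ℕ) (j : Fin q) : P.minRatio n j ≤ 1 := by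
  obtain ⟨l, hl, hle⟩ := exists_le_of_sum_le ⟨j, P.self_mem_block j⟩
    (P.sum_block_mul_colRatio n j).le
  exact (P.minRatio_le_colRatio hl).trans ((mul_le_iff_le_one_right (P.hb l)).1 hle)

theorem one_le_maxRatio (n : ℕ) (j : Fin q) : 1 ≤ P.maxRatio n j := by
  obtain ⟨l, hl, hle⟩ := exists_le_of_sum_le ⟨j, P.self_mem_block j⟩
    (P.sum_block_mul_colRatio n j).ge
  exact ((le_mul_iff_one_le_right (P.hb l)).1 hle).trans (P.colRatio_le_maxRatio hl)

theorem abs_colRatio_sub_one_le (n : ℕ) (j : Fin q) : |P.colRatio n j - 1| ≤ P.spread n j :=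
  Real.dist_le_of_mem_Icc
    ⟨P.minRatio_le_colRatio (P.self_mem_block j), P.colRatio_le_maxRatio (P.self_mem_block j)⟩
    ⟨P.minRatio_le_one n j, P.one_le_maxRatio n j⟩

theorem abs_rowRatio_sub_one_le (n : ℕ) {i : Fin p} {j : Fin q} (hij : 0 < P.X0 i j) :
    |P.rowRatio n i - 1| ≤ P.spread n j / P.delta := by
  obtain ⟨hlo, hhi⟩ := P.inv_rowRatio_mem (n := n) hij
  have hR := P.rowRatio_pos n i
  have hinv : |(P.rowRatio n i)⁻¹ - 1| ≤ P.spread n j :=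
    Real.dist_le_of_mem_Icc ⟨hlo, hhi⟩ ⟨P.minRatio_le_one n j, P.one_le_maxRatio n j⟩
  have hRδ : P.rowRatio n i ≤ P.delta⁻¹ :=
    le_inv_of_le_inv₀ P.delta_pos ((P.delta_le_minRatio n j).trans hlo)
  calc |P.rowRatio n i - 1| = P.rowRatio n i * |(P.rowRatio n i)⁻¹ - 1| := by
        rw [abs_sub_comm _ 1, ← abs_of_pos hR, ← abs_mul, abs_of_pos hR, mul_sub,
          mul_inv_cancel₀ hR.ne', mul_one]
    _ ≤ P.delta⁻¹ * P.spread n j :=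
        mul_le_mul hRδ hinv (abs_nonneg _) (inv_nonneg.2 P.delta_pos.le)
    _ = P.spread n j / P.delta := inv_mul_eq_div _ _

theorem isGeomBounded_spread (j : Fin q) : IsGeomBounded fun n => P.spread n j :=
  IsGeomBounded.of_le_mul (P.spread_nonneg · j) (P.spread_succ_le · j) j.pos
    (sub_lt_self 1 (pow_pos P.delta_pos _)) (P.spread_add_le · j)

theorem isGeomBounded_Crat_odd (j : Fin q) :
    IsGeomBounded fun n => |Crat P.b (P.X (2 * n + 1)) j - 1| :=
  (P.isGeomBounded_spread j).mono (P.abs_colRatio_sub_one_le · j)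

theorem isGeomBounded_Rrat_even (i : Fin p) :
    IsGeomBounded fun n => |Rrat P.a (P.X (2 * n)) i - 1| := by
  obtain ⟨j, hij⟩ := exists_pos_of_rowSum_pos (P.hX0.1.2.1 i)
  refine IsGeomBounded.of_succ (((P.isGeomBounded_spread j).const_mul
    (inv_nonneg.2 P.delta_pos.le)).mono fun n => ?_)
  rw [inv_mul_eq_div, show 2 * (n + 1) = 2 * n + 2 by ring]
  exact P.abs_rowRatio_sub_one_le n hij

theorem isGeomBounded_X_succ_sub (i : Fin p) (j : Fin q) :
    IsGeomBounded fun k => |P.X (k + 1) i j - P.X k i j| := by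
  have hle {k} : |P.X k i j| ≤ 1 := by
    rw [abs_of_nonneg (P.X_nonneg k i j)]
    exact entry_le_one (P.memGamma1_X k) i j
  refine .of_even_odd ((P.isGeomBounded_Rrat_even i).mono fun n => ?_)
    ((P.isGeomBounded_Crat_odd j).mono fun n => ?_)
  · have hR : Rrat P.a (P.X (2 * n)) i ≠ 0 := (div_pos ((P.memGamma1_X _).1.2.1 i) (P.ha i)).ne'
    rw [X_two_mul_add_one, abs_TR_sub hR j, ← X_two_mul_add_one]
    exact mul_le_of_le_one_left (abs_nonneg _) hle
  · show |P.X (2 * n + 2) i j - _| ≤ _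
    rw [X_two_mul_add_two, abs_TC_sub (P.colRatio_pos n j).ne' i, ← X_two_mul_add_two]
    exact mul_le_of_le_one_left (abs_nonneg _) hle

theorem exists_tendsto_X (i : Fin p) (j : Fin q) :
    ∃ L, Tendsto (fun n => P.X n i j) atTop (𝓝 L) ∧ IsGeomBounded fun n => |P.X n i j - L| :=
  exists_tendsto_of_isGeomBounded_sub (P.isGeomBounded_X_succ_sub i j)

theorem pos_iff_of_tendsto {i : Fin p} {j : Fin q} {L : ℝ}
    (h : Tendsto (fun n => P.X n i j) atTop (𝓝 L)) : 0 < L ↔ 0 < P.X0 i j := by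
  by_cases hij : 0 < P.X0 i j
  · exact iff_of_true (P.delta_pos.trans_le (ge_of_tendsto' h fun n => P.delta_le_X n hij)) hij
  · have hzero n : P.X n i j = 0 :=
      le_antisymm (not_lt.1 (mt (P.X_pos_iff n i j).1 hij)) (P.X_nonneg n i j)
    simp only [hzero, tendsto_const_nhds_iff] at h
    simp [← h, hij]

end Problem

end IPFP

theorem ipfp_fast_convergence_general
    (p q : ℕ)
    (a : Fin p → ℝ) (b : Fin q → ℝ)
    (ha : ∀ i, 0 < a i) (hb : ∀ j, 0 < b j)
    (hsa : ∑ i, a i = 1) (hsb : ∑ j, b j = 1)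
    (X0 : Matrix (Fin p) (Fin q) ℝ) (hX0 : memGamma1 X0)
    (h : ∃ S, memGamma a b S ∧ ∀ i j, 0 < S i j ↔ 0 < X0 i j) :
    (∀ i, geomSeq (fun n => Rrat a (ipfp a b X0 (2 * n)) i) 1) ∧
    (∀ j, geomSeq (fun n => Crat b (ipfp a b X0 (2 * n + 1)) j) 1) ∧
    ∃ Xinf : Matrix (Fin p) (Fin q) ℝ,
      (∀ i j, 0 < Xinf i j ↔ 0 < X0 i j) ∧ geomMat (ipfp a b X0) Xinf := by
  obtain ⟨S, hS, hSX0⟩ := h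
  let P : Problem p q := ⟨a, b, ha, hb, hsa, hsb, X0, hX0, S, hS, hSX0⟩
  choose L hL hLrate using P.exists_tendsto_X
  refine ⟨fun i => geomSeq_of_isGeomBounded (P.isGeomBounded_Rrat_even i),
    fun j => geomSeq_of_isGeomBounded (P.isGeomBounded_Crat_odd j), L,
    fun i j => P.pos_iff_of_tendsto (hL i j),
    tendsto_pi_nhds.2 fun i => tendsto_pi_nhds.2 (hL i), ?_⟩
  exact (IsGeomBounded.sum fun i _ => IsGeomBounded.sum fun j _ => hLrate i j)
    |>.limsup_rpow_inv_lt_one fun n => sum_nonneg fun i _ => sum_nonneg fun j _ => abs_nonneg _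

/-- If `Γ(a,b)` contains a matrix with the same support as `X_0`, then:
(i) each `(R_i(X_{2n}))_n` and each `(C_j(X_{2n+1}))_n` converges to `1` at an at least
geometric rate;
(ii) the IPFP sequence converges at an at least geometric rate to a matrix `X_∞` with
`Supp(X_∞) = Supp(X_0)`. -/
theorem ipfp_fast_convergence
    (p q : ℕ) (hp : 2 ≤ p) (hq : 2 ≤ q)
    (a : Fin p → ℝ) (b : Fin q → ℝ)
    (ha : ∀ i, 0 < a i) (hb : ∀ j, 0 < b j)
    (hsa : ∑ i, a i = 1) (hsb : ∑ j, b j = 1)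
    (X0 : Matrix (Fin p) (Fin q) ℝ) (hX0 : memGamma1 X0)
    (h : ∃ S, memGamma a b S ∧ ∀ i j, 0 < S i j ↔ 0 < X0 i j) :
    (∀ i, geomSeq (fun n => Rrat a (ipfp a b X0 (2 * n)) i) 1) ∧
    (∀ j, geomSeq (fun n => Crat b (ipfp a b X0 (2 * n + 1)) j) 1) ∧
    ∃ Xinf : Matrix (Fin p) (Fin q) ℝ,
      (∀ i j, 0 < Xinf i j ↔ 0 < X0 i j) ∧ geomMat (ipfp a b X0) Xinf :=
  ipfp_fast_convergence_general p q a b ha hb hsa hsb X0 hX0 h
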